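/- The set S(s₁,s₂,s₃) = {x ∈ ℂ^n \ {0} : f₁(x)=s₁, f₂(x)=s₂, f₃(x)=s₃}, where f₁(x) = Σᵢ 3^{2(i−1)}sign(Re xᵢ) + 3^{2i−1}sign(Im xᵢ), f₂(x) = ‖x‖₁, and f₃(x) = Σ_{xᵢ≠0} msign(Re xᵢ)·Im xᵢ/(|Re xᵢ|+|Im xᵢ|), satisfies: for all distinct a, b ∈ S(s₁,s₂,s₃), 0 < |⟨a,b⟩| < ‖a‖₂·‖b‖₂. -/

import Mathlib

open Matrix Finset Complex

noncomputable def inn {n : ℕ} (a b : Fin n → ℂ) : ℂ := ∑ i, (starRingEnd ℂ) (a i) * b i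

noncomputable def l2norm {n : ℕ} (x : Fin n → ℂ) : ℝ := Real.sqrt (∑ i, ‖x i‖ ^ 2)

def sparse {n : ℕ} (k : ℕ) (Ψ : Matrix (Fin n) (Fin n) ℂ) (x : Fin n → ℂ) : Prop :=
  (Finset.univ.filter (fun i => (Ψᴴ *ᵥ x) i ≠ 0)).card ≤ k

noncomputable def sgn (t : ℝ) : ℤ := if 0 < t then 1 else if t < 0 then -1 else 0

noncomputable def msign (t : ℝ) : ℝ := if 0 ≤ t then 1 else -1

noncomputable def f1 {n : ℕ} (x : Fin n → ℂ) : ℤ :=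
  ∑ i : Fin n, (3 ^ (2 * (i : ℕ)) * sgn (x i).re + 3 ^ (2 * (i : ℕ) + 1) * sgn (x i).im)

noncomputable def f2 {n : ℕ} (x : Fin n → ℂ) : ℝ := ∑ i, ‖x i‖

noncomputable def f3 {n : ℕ} (x : Fin n → ℂ) : ℝ :=
  ∑ i ∈ Finset.univ.filter (fun i => x i ≠ 0),
    msign (x i).re * (x i).im / (|(x i).re| + |(x i).im|)

/-!
The ternary weights in `f1` make it injective on sign patterns, so `a` and `b` lie coordinatewise
in the same closed quadrants, whence `Re ⟨a, b⟩ > 0`. If Cauchy–Schwarz were an equality, then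
`b = r • a`; `f2` forces `‖r‖ = 1`, and since on a fixed quadrant `f3Term (r * z) - f3Term z` has
the sign of `Im r`, `f3` forces `r` to be real. Finally `Re ⟨a, r • a⟩ = Re r * ‖a‖² > 0` gives
`r = 1`.
-/

lemma eq_of_sum_pow_mul_eq {β : ℤ} : ∀ {m : ℕ} {d d' : Fin m → ℤ}, (∀ i, |d i - d' i| < β) →
    ∑ i : Fin m, β ^ (i : ℕ) * d i = ∑ i : Fin m, β ^ (i : ℕ) * d' i → d = d'
  | 0, _, _, _, _ => Subsingleton.elim _ _
  | m + 1, d, d', hlt, h => by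
    simp only [Fin.sum_univ_succ, Fin.val_zero, pow_zero, one_mul, Fin.val_succ, pow_succ',
      mul_assoc, ← Finset.mul_sum] at h
    have hhead : d 0 = d' 0 := by
      have hdvd : β ∣ d 0 - d' 0 :=
        ⟨∑ i : Fin m, β ^ (i : ℕ) * d' i.succ - ∑ i : Fin m, β ^ (i : ℕ) * d i.succ,
          by linear_combination h⟩
      exact sub_eq_zero.1 (Int.eq_zero_of_abs_lt_dvd hdvd (hlt 0))
    have hpos : β ≠ 0 := by linarith [hlt 0, abs_nonneg (d 0 - d' 0)]
    rw [hhead, add_right_inj, mul_right_inj' hpos] at h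
    have htail := eq_of_sum_pow_mul_eq (fun i => hlt i.succ) h
    funext i
    exact Fin.cases hhead (fun j => congrFun htail j) i

lemma abs_sgn_le_one (t : ℝ) : |sgn t| ≤ 1 := by
  unfold sgn; split_ifs <;> simp

lemma mul_nonneg_of_sgn_eq {s t : ℝ} (h : sgn s = sgn t) : 0 ≤ s * t := by
  unfold sgn at h; split_ifs at h <;> nlinarith

lemma mul_pos_of_sgn_eq {s t : ℝ} (h : sgn s = sgn t) (hs : s ≠ 0) : 0 < s * t := by
  unfold sgn at h; split_ifs at h <;> first | nlinarith | exact absurd (by linarith) hs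

def SameQuadrant (z w : ℂ) : Prop := sgn z.re = sgn w.re ∧ sgn z.im = sgn w.im

lemma f1_eq_sum_nine_pow {n : ℕ} (x : Fin n → ℂ) :
    f1 x = ∑ i : Fin n, 9 ^ (i : ℕ) * (sgn (x i).re + 3 * sgn (x i).im) := by
  refine Finset.sum_congr rfl fun i _ => ?_
  rw [pow_succ, pow_mul]
  ring

lemma sameQuadrant_of_f1_eq {n : ℕ} {a b : Fin n → ℂ} (h : f1 a = f1 b) (i : Fin n) :
    SameQuadrant (a i) (b i) := by
  have hbd (x : ℂ) : (-1 ≤ sgn x.re ∧ sgn x.re ≤ 1) ∧ -1 ≤ sgn x.im ∧ sgn x.im ≤ 1 :=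
    ⟨abs_le.1 (abs_sgn_le_one _), abs_le.1 (abs_sgn_le_one _)⟩
  rw [f1_eq_sum_nine_pow, f1_eq_sum_nine_pow] at h
  have hdigit := congrFun (eq_of_sum_pow_mul_eq (fun j => ?_) h) i
  · have := hbd (a i); have := hbd (b i)
    exact ⟨by omega, by omega⟩
  · have := hbd (a j); have := hbd (b j)
    rw [abs_lt]; constructor <;> omega

namespace SameQuadrant

variable {z w : ℂ}

lemma re_conj_mul_nonneg (h : SameQuadrant z w) : 0 ≤ (starRingEnd ℂ z * w).re := by
  simpa using add_nonneg (mul_nonneg_of_sgn_eq h.1) (mul_nonneg_of_sgn_eq h.2)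

lemma re_conj_mul_pos (h : SameQuadrant z w) (hz : z ≠ 0) : 0 < (starRingEnd ℂ z * w).re := by
  have hre := mul_nonneg_of_sgn_eq h.1
  have him := mul_nonneg_of_sgn_eq h.2
  simp only [Complex.mul_re, Complex.conj_re, Complex.conj_im, neg_mul, sub_neg_eq_add]
  by_cases hz' : z.re = 0
  · have := mul_pos_of_sgn_eq h.2 fun him0 => hz (Complex.ext hz' him0)
    linarith
  · linarith [mul_pos_of_sgn_eq h.1 hz']

end SameQuadrant

lemma re_inn_pos {n : ℕ} {a b : Fin n → ℂ} (h : ∀ i, SameQuadrant (a i) (b i)) (ha : a ≠ 0) :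
    0 < (inn a b).re := by
  obtain ⟨i, hi⟩ := Function.ne_iff.1 ha
  rw [inn, Complex.re_sum]
  exact Finset.sum_pos' (fun j _ => (h j).re_conj_mul_nonneg)
    ⟨i, Finset.mem_univ i, (h i).re_conj_mul_pos hi⟩

lemma inn_eq_inner {n : ℕ} (a b : Fin n → ℂ) :
    inn a b = inner ℂ (WithLp.toLp 2 a) (WithLp.toLp 2 b) := by
  simp [inn, PiLp.inner_apply, mul_comm]

lemma l2norm_eq_norm {n : ℕ} (a : Fin n → ℂ) : l2norm a = ‖WithLp.toLp 2 a‖ := by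
  simp [l2norm, EuclideanSpace.norm_eq]

lemma norm_inn_le {n : ℕ} (a b : Fin n → ℂ) : ‖inn a b‖ ≤ l2norm a * l2norm b := by
  rw [inn_eq_inner, l2norm_eq_norm, l2norm_eq_norm]
  exact norm_inner_le_norm _ _

lemma exists_eq_smul_of_norm_inn_eq {n : ℕ} {a b : Fin n → ℂ} (ha : a ≠ 0) (hb : b ≠ 0)
    (h : ‖inn a b‖ = l2norm a * l2norm b) : ∃ r : ℂ, r ≠ 0 ∧ b = r • a := by
  rw [inn_eq_inner, l2norm_eq_norm, l2norm_eq_norm] at h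
  obtain ⟨r, hr, hba⟩ := (norm_inner_eq_norm_iff (by simpa using ha) (by simpa using hb)).1 h
  exact ⟨r, hr, by simpa using congrArg WithLp.ofLp hba⟩

lemma re_inn_smul_right {n : ℕ} (a : Fin n → ℂ) (r : ℂ) :
    (inn a (r • a)).re = r.re * l2norm a ^ 2 := by
  rw [inn_eq_inner, l2norm_eq_norm, WithLp.toLp_smul, inner_smul_right,
    inner_self_eq_norm_sq_to_K]
  norm_cast
  exact Complex.re_mul_ofReal _ _

lemma f2_smul {n : ℕ} (r : ℂ) (a : Fin n → ℂ) : f2 (r • a) = ‖r‖ * f2 a := by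
  simp [f2, Finset.mul_sum]

lemma f2_pos {n : ℕ} {a : Fin n → ℂ} (ha : a ≠ 0) : 0 < f2 a := by
  obtain ⟨i, hi⟩ := Function.ne_iff.1 ha
  exact Finset.sum_pos' (fun j _ => norm_nonneg (a j)) ⟨i, Finset.mem_univ i, norm_pos_iff.2 hi⟩

lemma norm_eq_one_of_f2_smul_eq {n : ℕ} {a : Fin n → ℂ} {r : ℂ} (ha : a ≠ 0)
    (h : f2 (r • a) = f2 a) : ‖r‖ = 1 := by
  rw [f2_smul] at h
  exact (mul_eq_right₀ (f2_pos ha).ne').1 h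

lemma msign_eq_of_sgn_eq {s t : ℝ} (h : sgn s = sgn t) : msign s = msign t := by
  unfold sgn at h; unfold msign
  split_ifs at h ⊢ <;> first | rfl | omega | linarith

lemma abs_eq_msign_mul (t : ℝ) : |t| = msign t * t := by
  unfold msign; split_ifs with h
  · rw [abs_of_nonneg h, one_mul]
  · rw [abs_of_neg (not_le.1 h), neg_one_mul]

lemma msign_eq_one_or_neg_one (t : ℝ) : msign t = 1 ∨ msign t = -1 := by
  unfold msign; split_ifs <;> simp

lemma abs_re_add_abs_im_pos {z : ℂ} (hz : z ≠ 0) : 0 < |z.re| + |z.im| :=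
  (norm_pos_iff.2 hz).trans_le (Complex.norm_le_abs_re_add_abs_im z)

noncomputable def f3Term (z : ℂ) : ℝ := msign z.re * z.im / (|z.re| + |z.im|)

lemma f3Term_mul_sub {r z : ℂ} (hr : r ≠ 0) (hz : z ≠ 0) (h : SameQuadrant z (r * z)) :
    f3Term (r * z) - f3Term z =
      r.im * (Complex.normSq z / ((|(r * z).re| + |(r * z).im|) * (|z.re| + |z.im|))) := by
  have hDrz := abs_re_add_abs_im_pos (mul_ne_zero hr hz)
  have hDz := abs_re_add_abs_im_pos hz
  rw [f3Term, f3Term, div_sub_div _ _ hDrz.ne' hDz.ne', mul_div_assoc']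
  congr 1
  rw [abs_eq_msign_mul (r * z).re, abs_eq_msign_mul (r * z).im, abs_eq_msign_mul z.re,
    abs_eq_msign_mul z.im, ← msign_eq_of_sgn_eq h.1, ← msign_eq_of_sgn_eq h.2]
  simp only [Complex.mul_re, Complex.mul_im, Complex.normSq_apply]
  rcases msign_eq_one_or_neg_one z.re with hm | hm <;>
    rcases msign_eq_one_or_neg_one z.im with hm' | hm' <;> rw [hm, hm'] <;> ring

lemma im_eq_zero_of_f3_smul_eq {n : ℕ} {a : Fin n → ℂ} {r : ℂ} (ha : a ≠ 0) (hr : r ≠ 0)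
    (hq : ∀ i, SameQuadrant (a i) (r * a i)) (h : f3 (r • a) = f3 a) : r.im = 0 := by
  set S := Finset.univ.filter fun i => a i ≠ 0
  set w : Fin n → ℝ := fun i =>
    Complex.normSq (a i) / ((|(r * a i).re| + |(r * a i).im|) * (|(a i).re| + |(a i).im|))
  have hsupp : (Finset.univ.filter fun i => (r • a) i ≠ 0) = S := by
    simp [S, hr]
  have hdiff : f3 (r • a) - f3 a = r.im * ∑ i ∈ S, w i := by
    rw [f3, f3, hsupp, ← Finset.sum_sub_distrib, Finset.mul_sum]
    exact Finset.sum_congr rfl fun i hi => f3Term_mul_sub hr (Finset.mem_filter.1 hi).2 (hq i)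
  have hpos : 0 < ∑ i ∈ S, w i := by
    obtain ⟨i, hi⟩ := Function.ne_iff.1 ha
    refine Finset.sum_pos (fun j hj => ?_) ⟨i, Finset.mem_filter.2 ⟨Finset.mem_univ i, hi⟩⟩
    have haj : a j ≠ 0 := (Finset.mem_filter.1 hj).2
    have := abs_re_add_abs_im_pos (mul_ne_zero hr haj)
    have := abs_re_add_abs_im_pos haj
    have := Complex.normSq_pos.2 haj
    positivity
  rw [h, sub_self] at hdiff
  exact (mul_eq_zero.1 hdiff.symm).resolve_right hpos.ne'

theorem stmt19 {n : ℕ} (s₁ : ℤ) (s₂ s₃ : ℝ) (a b : Fin n → ℂ)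
    (ha : a ∈ {x : Fin n → ℂ | x ≠ 0 ∧ f1 x = s₁ ∧ f2 x = s₂ ∧ f3 x = s₃})
    (hb : b ∈ {x : Fin n → ℂ | x ≠ 0 ∧ f1 x = s₁ ∧ f2 x = s₂ ∧ f3 x = s₃})
    (hne : a ≠ b) :
    0 < ‖inn a b‖ ∧ ‖inn a b‖ < l2norm a * l2norm b := by
  obtain ⟨ha0, ha1, ha2, ha3⟩ := ha
  obtain ⟨hb0, hb1, hb2, hb3⟩ := hb
  have hq := sameQuadrant_of_f1_eq (ha1.trans hb1.symm)
  have hre := re_inn_pos hq ha0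
  refine ⟨norm_pos_iff.2 fun h => by simp [h] at hre, (norm_inn_le a b).lt_of_ne fun heq => hne ?_⟩
  obtain ⟨r, hr, rfl⟩ := exists_eq_smul_of_norm_inn_eq ha0 hb0 heq
  have hnorm : ‖r‖ = 1 := norm_eq_one_of_f2_smul_eq ha0 (hb2.trans ha2.symm)
  have him : r.im = 0 := im_eq_zero_of_f3_smul_eq ha0 hr hq (hb3.trans ha3.symm)
  have hre' : 0 < r.re := by
    rw [re_inn_smul_right] at hre
    exact pos_of_mul_pos_left hre (sq_nonneg _)
  have hr1 : r = 1 := by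
    refine Complex.ext ?_ him
    rw [Complex.one_re, ← hnorm, ← Complex.abs_re_eq_norm.2 him, abs_of_pos hre']
  rw [hr1, one_smul]
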